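/- arXiv:1911.03900 — 2 statements merged into one kernel-verified Lean document; each statement's English description precedes it below -/
import Mathlib

section
/- Let X be a real Banach space, T > 0, and let 0 = t₀ < t₁ < ⋯ < t_N = T be a time grid with step sizes kₙ := tₙ − tₙ₋₁ and k := max₁≤n≤N kₙ. Let u : [0,T] → X be continuously differentiable. Then Σ_{n=1}^{N} ∫_{tₙ₋₁}^{tₙ} ‖u(t) − (u(tₙ₋₁) + u(tₙ))/2‖² dt ≤ k² · ∫₀^T ‖u'(t)‖² dt. -/
/-!
On a grid interval `[a, b]` put `m = (u a + u b) / 2`. Then `u s - m = ((u s - u a) - (u b - u s)) / 2`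
and each increment is at most the integral of `‖u'‖` over its half of `[a, b]`, so
`‖u s - m‖ ≤ ½ ∫ₐᵇ ‖u'‖` uniformly in `s`. Squaring, Cauchy–Schwarz and integrating over `[a, b]`
give `∫ₐᵇ ‖u - m‖² ≤ (b - a)² / 4 · ∫ₐᵇ ‖u'‖²`, and the grid intervals add up to `[0, T]`.
-/

open Set intervalIntegral

theorem sq_integral_le_mul_integral_sq {f : ℝ → ℝ} (hf : Continuous f) {a b : ℝ} (hab : a ≤ b) :
    (∫ s in a..b, f s) ^ 2 ≤ (b - a) * ∫ s in a..b, f s ^ 2 := by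
  set I := ∫ s in a..b, f s
  set J := ∫ s in a..b, f s ^ 2
  have hexpand :
      ∫ s in a..b, ((b - a) * f s - I) ^ 2 = (b - a) * ((b - a) * J - I ^ 2) := by
    have hsq : ∀ s, ((b - a) * f s - I) ^ 2
        = (b - a) ^ 2 * f s ^ 2 - 2 * (b - a) * I * f s + I ^ 2 := fun s => by ring
    have hf2 : Continuous fun s => (b - a) ^ 2 * f s ^ 2 := by fun_prop
    have hf1 : Continuous fun s => 2 * (b - a) * I * f s := by fun_prop
    simp_rw [hsq]
    rw [integral_add ((hf2.fun_sub hf1).intervalIntegrable _ _) intervalIntegrable_const,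
      integral_sub (hf2.intervalIntegrable _ _) (hf1.intervalIntegrable _ _),
      integral_const_mul, integral_const_mul, integral_const, smul_eq_mul]
    ring
  have hnonneg : 0 ≤ (b - a) * ((b - a) * J - I ^ 2) :=
    hexpand ▸ integral_nonneg hab fun s _ => sq_nonneg _
  rcases hab.eq_or_lt with rfl | hlt
  · simp [I]
  · linarith [nonneg_of_mul_nonneg_right hnonneg (sub_pos.mpr hlt)]

theorem sum_Icc_integral_adjacent_intervals {E : Type*} [NormedAddCommGroup E] [NormedSpace ℝ E]
    {f : ℝ → E} (hf : Continuous f) (t : ℕ → ℝ) (N : ℕ) :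
    ∑ n ∈ Finset.Icc 1 N, ∫ s in t (n - 1)..t n, f s = ∫ s in t 0..t N, f s := by
  rw [← sum_integral_adjacent_intervals fun _ _ => hf.intervalIntegrable _ _, Finset.range_eq_Ico,
    ← Finset.Ico_add_one_right_eq_Icc,
    ← Finset.sum_Ico_add' (fun n => ∫ s in t (n - 1)..t n, f s) 0 N 1]
  rfl

section

variable {X : Type*} [NormedAddCommGroup X] [NormedSpace ℝ X] {u : ℝ → X}

theorem norm_sub_le_integral_norm_deriv (hu : ContDiff ℝ 1 u) {x y : ℝ} (hxy : x ≤ y) :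
    ‖u y - u x‖ ≤ ∫ r in x..y, ‖deriv u r‖ := by
  -- A fencing argument against the primitive of `‖u'‖`; the fundamental theorem of calculus in
  -- `X` would need `X` complete.
  have hu' : Continuous (deriv u) := hu.continuous_deriv le_rfl
  have hud : Differentiable ℝ u := hu.differentiable one_ne_zero
  refine image_norm_le_of_norm_deriv_right_le_deriv_boundary (f := fun s => u s - u x)
    (f' := deriv u) (hu.continuous.sub continuous_const).continuousOn
    (fun s _ => ((hud s).hasDerivAt.sub_const (u x)).hasDerivWithinAt) (by simp)
    (fun s => hu'.norm.integral_hasStrictDerivAt x s |>.hasDerivAt) (fun _ _ => le_rfl)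
    ⟨hxy, le_rfl⟩

theorem norm_sub_average_le (hu : ContDiff ℝ 1 u) {a b s : ℝ} (hs : s ∈ Icc a b) :
    ‖u s - (2⁻¹ : ℝ) • (u a + u b)‖ ≤ 2⁻¹ * ∫ r in a..b, ‖deriv u r‖ := by
  have hF : Continuous fun r => ‖deriv u r‖ := (hu.continuous_deriv le_rfl).norm
  calc ‖u s - (2⁻¹ : ℝ) • (u a + u b)‖
      = ‖(2⁻¹ : ℝ) • (u s - u a) - (2⁻¹ : ℝ) • (u b - u s)‖ := by congr 1; module
    _ ≤ 2⁻¹ * ‖u s - u a‖ + 2⁻¹ * ‖u b - u s‖ := by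
        refine (norm_sub_le _ _).trans_eq ?_
        rw [norm_smul, norm_smul, Real.norm_of_nonneg (by norm_num)]
    _ ≤ 2⁻¹ * (∫ r in a..s, ‖deriv u r‖) + 2⁻¹ * ∫ r in s..b, ‖deriv u r‖ := by
        gcongr
        exacts [norm_sub_le_integral_norm_deriv hu hs.1, norm_sub_le_integral_norm_deriv hu hs.2]
    _ = 2⁻¹ * ∫ r in a..b, ‖deriv u r‖ := by
        rw [← mul_add, integral_add_adjacent_intervals (hF.intervalIntegrable a s)
          (hF.intervalIntegrable s b)]

theorem integral_norm_sub_average_sq_le (hu : ContDiff ℝ 1 u) {a b : ℝ} (hab : a ≤ b) :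
    ∫ s in a..b, ‖u s - (2⁻¹ : ℝ) • (u a + u b)‖ ^ 2
      ≤ (b - a) ^ 2 / 4 * ∫ s in a..b, ‖deriv u s‖ ^ 2 := by
  have hF : Continuous fun r => ‖deriv u r‖ := (hu.continuous_deriv le_rfl).norm
  set I := ∫ r in a..b, ‖deriv u r‖
  calc ∫ s in a..b, ‖u s - (2⁻¹ : ℝ) • (u a + u b)‖ ^ 2
      ≤ ∫ _ in a..b, (2⁻¹ * I) ^ 2 :=
        integral_mono_on hab
          (((hu.continuous.sub continuous_const).norm.pow 2).intervalIntegrable _ _)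
          intervalIntegrable_const
          fun s hs => pow_le_pow_left₀ (norm_nonneg _) (norm_sub_average_le hu hs) 2
    _ = (b - a) * I ^ 2 / 4 := by rw [integral_const, smul_eq_mul]; ring
    _ ≤ (b - a) * ((b - a) * ∫ s in a..b, ‖deriv u s‖ ^ 2) / 4 := by
        have hba : 0 ≤ b - a := sub_nonneg.mpr hab
        gcongr
        exact sq_integral_le_mul_integral_sq hF hab
    _ = (b - a) ^ 2 / 4 * ∫ s in a..b, ‖deriv u s‖ ^ 2 := by ring

end

theorem averaged_interpolation_L2_error_general
    {X : Type*} [NormedAddCommGroup X] [NormedSpace ℝ X]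
    (T : ℝ) (N : ℕ) (t : ℕ → ℝ)
    (ht0 : t 0 = 0) (htN : t N = T) (hmono : ∀ n, n < N → t n < t (n + 1))
    (k : ℝ) (hk : ∀ n, 1 ≤ n → n ≤ N → t n - t (n - 1) ≤ k)
    (u : ℝ → X) (hu : ContDiff ℝ 1 u) :
    ∑ n ∈ Finset.Icc 1 N,
        ∫ s in (t (n - 1))..(t n), ‖u s - (2⁻¹ : ℝ) • (u (t (n - 1)) + u (t n))‖ ^ 2
      ≤ k ^ 2 * ∫ s in (0 : ℝ)..T, ‖deriv u s‖ ^ 2 := by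
  have hF : Continuous fun s => ‖deriv u s‖ ^ 2 := ((hu.continuous_deriv le_rfl).norm).pow 2
  rw [← ht0, ← htN, ← sum_Icc_integral_adjacent_intervals hF, Finset.mul_sum]
  refine Finset.sum_le_sum fun n hn => ?_
  obtain ⟨hn1, hnN⟩ := Finset.mem_Icc.mp hn
  have hlt : t (n - 1) < t n := by simpa [Nat.sub_add_cancel hn1] using hmono (n - 1) (by omega)
  have hstep : (t n - t (n - 1)) ^ 2 / 4 ≤ k ^ 2 := by
    nlinarith [hk n hn1 hnN]
  exact (integral_norm_sub_average_sq_le hu hlt.le).trans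
    (mul_le_mul_of_nonneg_right hstep (integral_nonneg hlt.le fun s _ => sq_nonneg _))

/-- `L²`-in-time first order estimate for `u - a_k i_k u` (lemma 2.10 of the
paper with explicit constant `1`): on each subinterval the averaged nodal
interpolant is the mean of the endpoint values, and
`Σₙ ∫_{Iₙ} ‖u - (u(tₙ₋₁)+u(tₙ))/2‖² ≤ k² ∫₀ᵀ ‖u'‖²`. -/
theorem averaged_interpolation_L2_error
    {X : Type*} [NormedAddCommGroup X] [NormedSpace ℝ X]
    (T : ℝ) (hT : 0 < T) (N : ℕ) (hN : 0 < N) (t : ℕ → ℝ)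
    (ht0 : t 0 = 0) (htN : t N = T) (hmono : ∀ n, n < N → t n < t (n + 1))
    (k : ℝ) (hk : ∀ n, 1 ≤ n → n ≤ N → t n - t (n - 1) ≤ k)
    (u : ℝ → X) (hu : ContDiff ℝ 1 u) :
    ∑ n ∈ Finset.Icc 1 N,
        ∫ s in (t (n - 1))..(t n), ‖u s - (2⁻¹ : ℝ) • (u (t (n - 1)) + u (t n))‖ ^ 2
      ≤ k ^ 2 * ∫ s in (0 : ℝ)..T, ‖deriv u s‖ ^ 2 :=
  averaged_interpolation_L2_error_general T N t ht0 htN hmono k hk u hu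
end

section
/- Let X be a real normed vector space, let A, B ∈ X, let v : ℝ → X be the affine function v(t) = A + t·B, and let a < b be real numbers. Then for every t ∈ [a,b], ‖v(t)‖² ≤ (6/(b − a))·∫ₐᵇ ‖v(s)‖² ds. In particular sup_{t∈[a,b]} ‖v(t)‖ ≤ √6·(b − a)^{−1/2}·(∫ₐᵇ ‖v(s)‖² ds)^{1/2}, an inverse inequality between the L^∞ and L² norms of affine X-valued functions on an interval. -/
open Set intervalIntegral

/-! Write `α = ‖v a‖`, `β = ‖v b‖` and use `(b - a) v(s) = (s - a) v(b) + (b - s) v(a)`.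
The triangle inequality gives `‖v(t)‖ ≤ max α β` on `[a, b]`, while the reverse triangle
inequality gives `(b - a) ‖v(s)‖ ≥ |(s - a) β - (b - s) α|`. Integrating the square of this
scalar affine function yields `∫ₐᵇ ‖v‖² ≥ (b - a)(α² - αβ + β²)/3`, and
`max α β ^ 2 ≤ 2 (α² - αβ + β²)`. -/

theorem integral_interpolant_sq (a b α β : ℝ) :
    ∫ s in a..b, ((s - a) * β - (b - s) * α) ^ 2
      = (b - a) ^ 3 / 3 * (α ^ 2 - α * β + β ^ 2) := by
  have hexpand : ∀ s : ℝ, ((s - a) * β - (b - s) * α) ^ 2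
      = (a * β + b * α) ^ 2 - 2 * (a * β + b * α) * (α + β) * s + (α + β) ^ 2 * s ^ 2 :=
    fun s => by ring
  simp_rw [hexpand]
  rw [integral_add, integral_sub, integral_const_mul, integral_const_mul]
  · simp only [integral_const, integral_id, integral_pow, smul_eq_mul]
    ring
  all_goals exact (by fun_prop : Continuous _).intervalIntegrable _ _

theorem max_sq_le_two_mul (α β : ℝ) : max α β ^ 2 ≤ 2 * (α ^ 2 - α * β + β ^ 2) := by
  rcases le_total α β with h | h
  · rw [max_eq_right h]; nlinarith [sq_nonneg (α - β), sq_nonneg α]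
  · rw [max_eq_left h]; nlinarith [sq_nonneg (α - β), sq_nonneg β]

section Affine

variable {X : Type*} [NormedAddCommGroup X] [NormedSpace ℝ X] (A B : X) {a b s : ℝ}

theorem sub_smul_affine_eq (a b s : ℝ) :
    (b - a) • (A + s • B) = (s - a) • (A + b • B) + (b - s) • (A + a • B) := by
  module

theorem mul_norm_affine_le (hs : s ∈ Icc a b) :
    (b - a) * ‖A + s • B‖ ≤ (s - a) * ‖A + b • B‖ + (b - s) * ‖A + a • B‖ := by
  have hsa : 0 ≤ s - a := sub_nonneg.2 hs.1
  have hbs : 0 ≤ b - s := sub_nonneg.2 hs.2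
  calc (b - a) * ‖A + s • B‖ = ‖(b - a) • (A + s • B)‖ := by
        rw [norm_smul, Real.norm_of_nonneg (sub_nonneg.2 (hs.1.trans hs.2))]
    _ ≤ ‖(s - a) • (A + b • B)‖ + ‖(b - s) • (A + a • B)‖ := by
        rw [sub_smul_affine_eq]
        exact norm_add_le _ _
    _ = (s - a) * ‖A + b • B‖ + (b - s) * ‖A + a • B‖ := by
        rw [norm_smul, norm_smul, Real.norm_of_nonneg hsa, Real.norm_of_nonneg hbs]

theorem abs_sub_le_mul_norm_affine (hs : s ∈ Icc a b) :
    |(s - a) * ‖A + b • B‖ - (b - s) * ‖A + a • B‖| ≤ (b - a) * ‖A + s • B‖ := by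
  have hsa : 0 ≤ s - a := sub_nonneg.2 hs.1
  have hbs : 0 ≤ b - s := sub_nonneg.2 hs.2
  calc |(s - a) * ‖A + b • B‖ - (b - s) * ‖A + a • B‖|
      = |‖(s - a) • (A + b • B)‖ - ‖-((b - s) • (A + a • B))‖| := by
        rw [norm_neg, norm_smul, norm_smul, Real.norm_of_nonneg hsa, Real.norm_of_nonneg hbs]
    _ ≤ ‖(s - a) • (A + b • B) - -((b - s) • (A + a • B))‖ := abs_norm_sub_norm_le _ _
    _ = (b - a) * ‖A + s • B‖ := by
        rw [sub_neg_eq_add, ← sub_smul_affine_eq, norm_smul,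
          Real.norm_of_nonneg (sub_nonneg.2 (hs.1.trans hs.2))]

theorem norm_affine_le_max (hab : a < b) (hs : s ∈ Icc a b) :
    ‖A + s • B‖ ≤ max ‖A + a • B‖ ‖A + b • B‖ := by
  have h := mul_norm_affine_le A B hs
  have hsa : 0 ≤ s - a := sub_nonneg.2 hs.1
  have hbs : 0 ≤ b - s := sub_nonneg.2 hs.2
  refine le_of_mul_le_mul_left ?_ (sub_pos.2 hab)
  nlinarith [le_max_left ‖A + a • B‖ ‖A + b • B‖, le_max_right ‖A + a • B‖ ‖A + b • B‖]

theorem le_integral_norm_affine_sq (hab : a < b) :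
    (b - a) / 3 * (‖A + a • B‖ ^ 2 - ‖A + a • B‖ * ‖A + b • B‖ + ‖A + b • B‖ ^ 2)
      ≤ ∫ s in a..b, ‖A + s • B‖ ^ 2 := by
  have hmono : ∫ s in a..b, ((s - a) * ‖A + b • B‖ - (b - s) * ‖A + a • B‖) ^ 2
      ≤ ∫ s in a..b, ((b - a) * ‖A + s • B‖) ^ 2 := by
    refine integral_mono_on hab.le ?_ ?_ fun s hs => ?_
    · exact (by fun_prop : Continuous _).intervalIntegrable _ _
    · exact (by fun_prop : Continuous _).intervalIntegrable _ _
    · exact sq_le_sq.2 ((abs_sub_le_mul_norm_affine A B hs).trans (le_abs_self _))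
  simp_rw [integral_interpolant_sq, mul_pow, integral_const_mul] at hmono
  refine le_of_mul_le_mul_left ?_ (pow_pos (sub_pos.2 hab) 2)
  linarith

end Affine

/-- Inverse inequality between the `L^∞` and `L²` norms of affine `X`-valued
functions on an interval: for `v(t) = A + t B` and `t ∈ [a,b]`,
`‖v(t)‖² ≤ (6/(b-a)) ∫ₐᵇ ‖v‖²`, hence
`sup_{[a,b]} ‖v‖ ≤ √6 (b-a)^{-1/2} (∫ₐᵇ ‖v‖²)^{1/2}`. -/
theorem affine_inverse_inequality
    {X : Type*} [NormedAddCommGroup X] [NormedSpace ℝ X]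
    (A B : X) (a b : ℝ) (hab : a < b) :
    (∀ t ∈ Icc a b, ‖A + t • B‖ ^ 2 ≤ (6 / (b - a)) * ∫ s in a..b, ‖A + s • B‖ ^ 2)
    ∧ (∀ t ∈ Icc a b, ‖A + t • B‖
        ≤ Real.sqrt 6 * (b - a) ^ (-(1 / 2 : ℝ))
          * Real.sqrt (∫ s in a..b, ‖A + s • B‖ ^ 2)) := by
  have hba : 0 < b - a := sub_pos.2 hab
  set α := ‖A + a • B‖
  set β := ‖A + b • B‖
  set I := ∫ s in a..b, ‖A + s • B‖ ^ 2
  have hsq : ∀ t ∈ Icc a b, ‖A + t • B‖ ^ 2 ≤ 6 / (b - a) * I := fun t ht =>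
    calc ‖A + t • B‖ ^ 2 ≤ max α β ^ 2 :=
          pow_le_pow_left₀ (norm_nonneg _) (norm_affine_le_max A B hab ht) 2
      _ ≤ 2 * (α ^ 2 - α * β + β ^ 2) := max_sq_le_two_mul α β
      _ = 6 / (b - a) * ((b - a) / 3 * (α ^ 2 - α * β + β ^ 2)) := by field_simp; ring
      _ ≤ 6 / (b - a) * I := by gcongr; exact le_integral_norm_affine_sq A B hab
  refine ⟨hsq, fun t ht => ?_⟩
  calc ‖A + t • B‖ = Real.sqrt (‖A + t • B‖ ^ 2) := (Real.sqrt_sq (norm_nonneg _)).symm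
    _ ≤ Real.sqrt (6 / (b - a) * I) := Real.sqrt_le_sqrt (hsq t ht)
    _ = Real.sqrt 6 * (b - a) ^ (-(1 / 2 : ℝ)) * Real.sqrt I := by
        rw [div_mul_eq_mul_div, Real.sqrt_div' _ hba.le, Real.sqrt_mul (by norm_num),
          Real.rpow_neg hba.le, ← Real.sqrt_eq_rpow]
        ring
end
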